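/- If K is a (q, k, 1)-difference set (i.e., λ = 1), then for every j with 1 ≤ j ≤ ℓ-1 the cyclotomic number (0, j) equals 0 or 2. -/
import Mathlib

open Finset

/-- A finset admitting a fixed-point-free involution has even cardinality. -/
private lemma even_card_of_invol {α : Type*} [DecidableEq α] :
    ∀ (n : ℕ) (S : Finset α) (f : α → α), S.card ≤ n →
      (∀ x ∈ S, f x ∈ S) → (∀ x ∈ S, f (f x) = x) → (∀ x ∈ S, f x ≠ x) →
      Even S.card := by
  intro n
  induction n with
  | zero =>
    intro S f h _ _ _
    simp [Nat.le_zero.mp h]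
  | succ n ih =>
    intro S f hle h1 h2 h3
    rcases S.eq_empty_or_nonempty with rfl | ⟨x, hx⟩
    · simp
    · have hfx : f x ∈ S.erase x := mem_erase.mpr ⟨h3 x hx, h1 x hx⟩
      have hc1 : (S.erase x).card = S.card - 1 := card_erase_of_mem hx
      have hc2 : ((S.erase x).erase (f x)).card = (S.erase x).card - 1 :=
        card_erase_of_mem hfx
      have hpos : 0 < (S.erase x).card := card_pos.mpr ⟨f x, hfx⟩
      have hpos2 : 0 < S.card := card_pos.mpr ⟨x, hx⟩
      have hmem : ∀ y ∈ (S.erase x).erase (f x), y ∈ S := fun y hy =>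
        mem_of_mem_erase (mem_of_mem_erase hy)
      have h1' : ∀ y ∈ (S.erase x).erase (f x), f y ∈ (S.erase x).erase (f x) := by
        intro y hy
        have hyS := hmem y hy
        have hynex : y ≠ x := (mem_erase.mp (mem_of_mem_erase hy)).1
        have hynefx : y ≠ f x := (mem_erase.mp hy).1
        refine mem_erase.mpr ⟨?_, mem_erase.mpr ⟨?_, h1 y hyS⟩⟩
        · intro hfy
          exact hynex (by rw [← h2 y hyS, hfy, h2 x hx])
        · intro hfy
          exact hynefx (by rw [← h2 y hyS, hfy])
      have hev : Even ((S.erase x).erase (f x)).card := by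
        refine ih _ f (by omega) h1' (fun y hy => h2 y (hmem y hy))
          (fun y hy => h3 y (hmem y hy))
      obtain ⟨m, hm⟩ := hev
      exact ⟨m + 1, by omega⟩

/-- Cyclotomic number `(i, j)` with respect to generator `g` and divisor `ℓ`. -/
noncomputable def cyc {F : Type*} [Field F] [Fintype F] (g : Fˣ) (ℓ : ℕ) (i j : ℤ) : ℕ :=
  Nat.card {x : F // (∃ y : Fˣ, x = 1 + ((g ^ i * y ^ ℓ : Fˣ) : F)) ∧
    ∃ z : Fˣ, x = ((g ^ j * z ^ ℓ : Fˣ) : F)}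

/-- The set of `ℓ`-th powers in `Fˣ`, viewed inside `F`. -/
def Kset (F : Type*) [Field F] (ℓ : ℕ) : Set F :=
  {x : F | ∃ y : Fˣ, x = ((y ^ ℓ : Fˣ) : F)}

/-- `H` is a difference set of `(F, +)` with parameter `lam`. -/
def IsDiffSet {F : Type*} [Field F] (H : Set F) (lam : ℕ) : Prop :=
  ∀ z : F, z ≠ 0 →
    Nat.card {p : F × F // p.1 ∈ H ∧ p.2 ∈ H ∧ p.1 - p.2 = z} = lam

theorem diffSet_lambda_one_cyc {F : Type*} [Field F] [Fintype F] (g : Fˣ) (ℓ : ℕ)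
    (hℓ2 : 2 ≤ ℓ) (hg : ∀ x : Fˣ, x ∈ Subgroup.zpowers g)
    (hodd : Odd (Fintype.card F)) (hℓ : ℓ ∣ Fintype.card F - 1)
    (k : ℕ) (hk : k = (Fintype.card F - 1) / ℓ)
    (hlam1 : (k - 1) / ℓ = 1)
    (hds : IsDiffSet (Kset F ℓ) 1) :
    ∀ j : ℕ, 1 ≤ j → j ≤ ℓ - 1 → cyc g ℓ 0 (j : ℤ) = 0 ∨ cyc g ℓ 0 (j : ℤ) = 2 := by
  classical
  have hℓpos : (0:ℤ) < (ℓ:ℤ) := by exact_mod_cast (by omega : 0 < ℓ)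
  have horder : orderOf g = Fintype.card F - 1 := by
    rw [orderOf_eq_card_of_forall_mem_zpowers hg, Nat.card_eq_fintype_card,
      Fintype.card_units]
  have key_dvd : ∀ (n : ℤ) (z : Fˣ), g ^ n = z ^ ℓ → (ℓ:ℤ) ∣ n := by
    intro n z h
    obtain ⟨t, ht⟩ := Subgroup.mem_zpowers_iff.mp (hg z)
    have h1 : g ^ (n - t * ℓ) = 1 := by
      rw [zpow_sub, h, ← ht, ← zpow_natCast (g ^ t) ℓ, ← zpow_mul, mul_inv_eq_one]
    have h2 : ((orderOf g : ℤ)) ∣ n - t * ℓ := orderOf_dvd_iff_zpow_eq_one.mpr h1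
    rw [horder] at h2
    have h3 : (ℓ:ℤ) ∣ ((Fintype.card F - 1 : ℕ) : ℤ) := Int.natCast_dvd_natCast.mpr hℓ
    have h4 : (ℓ:ℤ) ∣ n - t * ℓ := dvd_trans h3 h2
    have h5 : (ℓ:ℤ) ∣ t * ℓ := dvd_mul_left (ℓ:ℤ) t
    have := dvd_add h4 h5
    simpa using this
  have coset_unique : ∀ (i j : ℤ) (x : F), x ≠ 0 →
      (∃ z : Fˣ, x = ((g ^ i * z ^ ℓ : Fˣ) : F)) →
      (∃ w : Fˣ, x = ((g ^ j * w ^ ℓ : Fˣ) : F)) → (ℓ:ℤ) ∣ i - j := by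
    rintro i j x hx ⟨z, hz⟩ ⟨w, hw⟩
    have he : (g ^ i * z ^ ℓ : Fˣ) = g ^ j * w ^ ℓ := Units.ext (by rw [← hz, ← hw])
    have h2 : g ^ (i - j) = (w * z⁻¹) ^ ℓ := by
      rw [zpow_sub, mul_pow, inv_pow, ← div_eq_mul_inv, ← div_eq_mul_inv,
        div_eq_div_iff_mul_eq_mul]
      rw [he]
      exact mul_comm _ _
    exact key_dvd _ _ h2
  have coset_exists : ∀ x : Fˣ, ∃ i : ℕ, i < ℓ ∧
      ∃ z : Fˣ, (x : F) = ((g ^ (i:ℤ) * z ^ ℓ : Fˣ) : F) := by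
    intro x
    obtain ⟨t, ht⟩ := Subgroup.mem_zpowers_iff.mp (hg x)
    have hmod1 : 0 ≤ t % ℓ := Int.emod_nonneg t (by omega)
    have hmod2 : t % ℓ < ℓ := Int.emod_lt_of_pos t hℓpos
    refine ⟨(t % ℓ).toNat, by omega, g ^ (t / ℓ), ?_⟩
    have hu : (g ^ (((t % ℓ).toNat : ℕ) : ℤ) * (g ^ (t / ℓ)) ^ ℓ : Fˣ) = x := by
      rw [Int.toNat_of_nonneg hmod1, ← zpow_natCast (g ^ (t / ℓ)) ℓ, ← zpow_mul,
        ← zpow_add, ← ht]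
      congr 1
      rw [mul_comm (t / ℓ) (ℓ:ℤ)]
      exact Int.emod_add_mul_ediv t ℓ
    rw [← hu]
  -- power predicate
  set PK : F → Prop := fun x => ∃ y : Fˣ, x = ((y ^ ℓ : Fˣ) : F) with hPK
  have PK_ne : ∀ x, PK x → x ≠ 0 := by rintro x ⟨y, rfl⟩; exact Units.ne_zero _
  have PK_one : PK 1 := ⟨1, by simp⟩
  have PK_mul : ∀ a b, PK a → PK b → PK (a * b) := by
    rintro a b ⟨y, rfl⟩ ⟨w, rfl⟩
    exact ⟨y * w, by rw [mul_pow]; simp⟩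
  have PK_inv : ∀ a, PK a → PK a⁻¹ := by
    rintro a ⟨y, rfl⟩
    exact ⟨y⁻¹, by rw [inv_pow]; simp⟩
  have huniq : ∀ z : F, z ≠ 0 → ∃ p : F × F, (PK p.1 ∧ PK p.2 ∧ p.1 - p.2 = z) ∧
      ∀ q : F × F, (PK q.1 ∧ PK q.2 ∧ q.1 - q.2 = z) → q = p := by
    intro z hz
    have h := hds z hz
    rw [Nat.card_eq_one_iff_exists] at h
    obtain ⟨⟨p, hp⟩, hu⟩ := h
    exact ⟨p, hp, fun q hq => congrArg Subtype.val (hu ⟨q, hq⟩)⟩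
  -- the finsets A j
  set A : ℤ → Finset F := fun j => univ.filter fun x =>
    (∃ y : Fˣ, x = 1 + ((g ^ (0:ℤ) * y ^ ℓ : Fˣ) : F)) ∧
    ∃ z : Fˣ, x = ((g ^ j * z ^ ℓ : Fˣ) : F) with hA
  have hcyc : ∀ j : ℤ, cyc g ℓ 0 j = (A j).card := by
    intro j
    rw [cyc, Nat.card_eq_fintype_card, Fintype.card_subtype]
  have memA : ∀ (j : ℤ) (x : F), x ∈ A j ↔
      ((∃ y : Fˣ, x = 1 + ((y ^ ℓ : Fˣ) : F)) ∧
        ∃ z : Fˣ, x = ((g ^ j * z ^ ℓ : Fˣ) : F)) := by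
    intro j x
    rw [hA]
    simp [zpow_zero, one_mul]
  have memA_ne : ∀ (j : ℤ) (x : F), x ∈ A j → x ≠ 0 := by
    intro j x hx
    obtain ⟨_, ⟨z, hz⟩⟩ := (memA j x).mp hx
    rw [hz]; exact Units.ne_zero _
  -- parity via the involution x ↦ 1 + (x-1)⁻¹
  have hparity : ∀ j : ℤ, ¬ (∃ z : Fˣ, (2:F) = ((g ^ j * z ^ ℓ : Fˣ) : F)) →
      Even (A j).card := by
    intro j h2
    refine even_card_of_invol (A j).card (A j) (fun x => 1 + (x - 1)⁻¹) le_rfl ?_ ?_ ?_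
    · intro x hx
      obtain ⟨⟨y, hy⟩, ⟨z, hz⟩⟩ := (memA j x).mp hx
      have hyne : ((y ^ ℓ : Fˣ) : F) ≠ 0 := Units.ne_zero _
      have hx1 : x - 1 = ((y ^ ℓ : Fˣ) : F) := by rw [hy]; ring
      refine (memA j _).mpr ⟨⟨y⁻¹, ?_⟩, ⟨z * y⁻¹, ?_⟩⟩
      · show 1 + (x - 1)⁻¹ = 1 + ((y⁻¹ ^ ℓ : Fˣ) : F)
        rw [hx1, inv_pow]
        simp
      · show 1 + (x - 1)⁻¹ = ((g ^ j * (z * y⁻¹) ^ ℓ : Fˣ) : F)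
        have hstep : 1 + (x - 1)⁻¹ = x * (x - 1)⁻¹ := by
          rw [hx1, hy]
          field_simp
          ring
        have hu : (g ^ j * (z * y⁻¹) ^ ℓ : Fˣ) = (g ^ j * z ^ ℓ) * (y ^ ℓ)⁻¹ := by
          rw [mul_pow, inv_pow, mul_assoc]
        rw [hstep, hx1, hz, hu]
        simp
    · intro x _
      show 1 + ((1 + (x - 1)⁻¹) - 1)⁻¹ = x
      rw [add_sub_cancel_left, inv_inv]
      ring
    · intro x hx heq
      have heq' : 1 + (x - 1)⁻¹ = x := heq
      obtain ⟨⟨y, hy⟩, ⟨z, hz⟩⟩ := (memA j x).mp hx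
      have hx1 : x - 1 = ((y ^ ℓ : Fˣ) : F) := by rw [hy]; ring
      have hyne : x - 1 ≠ 0 := by rw [hx1]; exact Units.ne_zero _
      have hinv : (x - 1)⁻¹ = x - 1 := by linear_combination heq'
      have hsq : (x - 1) * (x - 1) = 1 := by
        calc (x - 1) * (x - 1) = (x - 1) * (x - 1)⁻¹ := by rw [hinv]
          _ = 1 := mul_inv_cancel₀ hyne
      rcases mul_self_eq_one_iff.mp hsq with h1 | h1
      · have hx2 : (2:F) = x := by linear_combination -h1
        exact h2 ⟨z, by rw [hx2, hz]⟩
      · have hx0 : x = 0 := by linear_combination h1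
        exact memA_ne j x hx hx0
  -- (0,0) = 1
  have hA0 : (A 0).card = 1 := by
    obtain ⟨p, ⟨hp1, hp2, hp3⟩, hup⟩ := huniq 1 one_ne_zero
    have hset : A 0 = {p.1} := by
      ext x
      simp only [mem_singleton]
      constructor
      · intro hx
        obtain ⟨⟨y, hy⟩, ⟨z, hz⟩⟩ := (memA 0 x).mp hx
        have hx2 : PK (x - 1) := ⟨y, by rw [hy]; ring⟩
        have hx3 : PK x := ⟨z, by rw [hz]; simp⟩
        have := hup (x, x - 1) ⟨hx3, hx2, by ring⟩
        exact congrArg Prod.fst this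
      · intro hx
        subst hx
        obtain ⟨z, hz⟩ := hp1
        obtain ⟨y, hy⟩ := hp2
        refine (memA 0 _).mpr ⟨⟨y, ?_⟩, ⟨z, by rw [hz]; simp⟩⟩
        rw [← hy]
        linear_combination hp3
    rw [hset, card_singleton]
  -- 2 ≠ 0
  have h2ne : (2:F) ≠ 0 := by
    intro h
    have hdvd2 : ringChar F ∣ 2 := ringChar.dvd (by exact_mod_cast h)
    have hne1 : ringChar F ≠ 1 := CharP.ringChar_ne_one
    have h2' : ringChar F = 2 := by
      rcases (Nat.prime_two).eq_one_or_self_of_dvd (ringChar F) hdvd2 with h' | h'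
      · exact absurd h' hne1
      · exact h'
    haveI : CharP F 2 := ringChar.of_eq h2'
    obtain ⟨n, _, hcard⟩ := FiniteField.card F 2
    rw [hcard] at hodd
    have hev : Even (2 ^ (n:ℕ)) := (Nat.even_pow).mpr ⟨even_two, n.pos.ne'⟩
    exact (Nat.not_even_iff_odd.mpr hodd) hev
  -- main target
  intro j hj1 hj2
  have hjℓ : j < ℓ := by omega
  have h20 : ∃ z : Fˣ, (2:F) = ((g ^ (0:ℤ) * z ^ ℓ : Fˣ) : F) := by
    by_contra h
    have := hparity 0 h
    rw [hA0] at this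
    simp at this
  have h2j : ¬ ∃ z : Fˣ, (2:F) = ((g ^ (j:ℤ) * z ^ ℓ : Fˣ) : F) := by
    intro h
    have hd := coset_unique (j:ℤ) 0 2 h2ne h h20
    rw [sub_zero] at hd
    have hdj : ℓ ∣ j := by exact_mod_cast hd
    have := Nat.le_of_dvd (by omega) hdj
    omega
  have hevenj : Even (A (j:ℤ)).card := hparity _ h2j
  -- pair data
  have hrep2 : ∀ (i : ℤ) (x y : F), x ∈ A i → y ∈ A i →
      PK (y - 1) ∧ PK (y * x⁻¹ * (x - 1)) ∧
        (y - 1) - (y * x⁻¹ * (x - 1)) = (y * x⁻¹) - 1 ∧ PK (y * x⁻¹) ∧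
        x ≠ 0 ∧ y ≠ 0 := by
    intro i x y hx hy
    obtain ⟨⟨a, ha⟩, ⟨z, hz⟩⟩ := (memA i x).mp hx
    obtain ⟨⟨b, hb⟩, ⟨w, hw⟩⟩ := (memA i y).mp hy
    have hx0 : x ≠ 0 := memA_ne i x hx
    have hy0 : y ≠ 0 := memA_ne i y hy
    have hPKy1 : PK (y - 1) := ⟨b, by rw [hb]; ring⟩
    have hPKx1 : PK (x - 1) := ⟨a, by rw [ha]; ring⟩
    have hPKt : PK (y * x⁻¹) := by
      refine ⟨w * z⁻¹, ?_⟩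
      have hu : (g ^ i * w ^ ℓ : Fˣ) * (g ^ i * z ^ ℓ)⁻¹ = (w * z⁻¹) ^ ℓ := by
        rw [mul_pow, inv_pow, mul_inv, mul_comm (g ^ i) (w ^ ℓ), mul_assoc,
          mul_inv_cancel_left]
      rw [hz, hw, ← hu]
      simp
    have htx : y * x⁻¹ * x = y := by field_simp
    refine ⟨hPKy1, PK_mul _ _ hPKt hPKx1, ?_, hPKt, hx0, hy0⟩
    rw [mul_sub, htx]
    ring
  -- case on whether -1 is an ℓ-th power
  by_cases hK1 : PK (-1)
  · -- A j is empty
    rw [hcyc]; left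
    by_contra h0
    have h2le : 2 ≤ (A (j:ℤ)).card := by
      obtain ⟨m, hm⟩ := hevenj
      omega
    have h1lt : 1 < (A (j:ℤ)).card := by omega
    obtain ⟨x, hx, y, hy, hxy⟩ := Finset.one_lt_card.mp h1lt
    obtain ⟨hPKy1, hPKta, hiden, hPKt, hx0, hy0⟩ := hrep2 (j:ℤ) x y hx hy
    have htne1 : y * x⁻¹ ≠ 1 := by
      intro h
      apply hxy
      rw [← div_eq_mul_inv] at h
      exact ((div_eq_one_iff_eq hx0).mp h).symm
    have htsub : y * x⁻¹ - 1 ≠ 0 := sub_ne_zero.mpr htne1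
    obtain ⟨p, hp, hup⟩ := huniq (y * x⁻¹ - 1) htsub
    have e1 := hup (y - 1, y * x⁻¹ * (x - 1)) ⟨hPKy1, hPKta, hiden⟩
    have e2 := hup (-1, -(y * x⁻¹)) ⟨hK1, by
        have hr : -(y * x⁻¹) = -1 * (y * x⁻¹) := by ring
        rw [hr]; exact PK_mul _ _ hK1 hPKt, by ring⟩
    have e3 : ((y - 1 : F), y * x⁻¹ * (x - 1)) = ((-1 : F), -(y * x⁻¹)) := by rw [e1, e2]
    have hy1 : y - 1 = -1 := congrArg Prod.fst e3
    apply hy0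
    linear_combination hy1
  · -- -1 is not an ℓ-th power: counting argument
    have hdisj : ∀ i ∈ range ℓ, ∀ i' ∈ range ℓ, i ≠ i' →
        Disjoint (A (i:ℤ)) (A (i':ℤ)) := by
      intro i hi i' hi' hne
      rw [Finset.disjoint_left]
      intro x hx hx'
      obtain ⟨_, hz⟩ := (memA (i:ℤ) x).mp hx
      obtain ⟨_, hz'⟩ := (memA (i':ℤ) x).mp hx'
      obtain ⟨c, hc⟩ := coset_unique (i:ℤ) (i':ℤ) x (memA_ne _ x hx) hz hz'
      rw [mem_range] at hi hi'
      have hb1 : ((i:ℤ) - i') < ℓ := by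
        have h1 : (i:ℤ) < ℓ := by exact_mod_cast hi
        have h2 : (0:ℤ) ≤ i' := by positivity
        omega
      have hb2 : -(ℓ:ℤ) < (i:ℤ) - i' := by
        have h1 : (i':ℤ) < ℓ := by exact_mod_cast hi'
        have h2 : (0:ℤ) ≤ (i:ℤ) := by positivity
        omega
      have hc1 : c < 1 := by
        by_contra hcon
        push_neg at hcon
        nlinarith
      have hc2 : -1 < c := by
        by_contra hcon
        push_neg at hcon
        nlinarith
      have hc0 : c = 0 := by omega
      rw [hc0, mul_zero] at hc
      have : (i:ℤ) = i' := by omega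
      exact hne (by exact_mod_cast this)
    set KF : Finset F := univ.filter PK with hKF
    have memKF : ∀ x : F, x ∈ KF ↔ PK x := by intro x; simp [hKF]
    -- total count
    have hsum1 : ∑ i ∈ range ℓ, (A (i:ℤ)).card = KF.card := by
      rw [← Finset.card_biUnion hdisj]
      have himg : (range ℓ).biUnion (fun i => A (i:ℤ)) = KF.image (fun a => 1 + a) := by
        ext x
        rw [Finset.mem_biUnion]
        constructor
        · rintro ⟨i, hi, hx⟩
          obtain ⟨⟨y, hy⟩, _⟩ := (memA (i:ℤ) x).mp hx
          refine Finset.mem_image.mpr ⟨((y ^ ℓ : Fˣ) : F), (memKF _).mpr ⟨y, rfl⟩, ?_⟩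
          rw [hy]
        · intro hx
          obtain ⟨a, haK, hax⟩ := Finset.mem_image.mp hx
          obtain ⟨y, hy⟩ := (memKF a).mp haK
          have hx0 : x ≠ 0 := by
            intro h
            apply hK1
            have ha1 : a = -1 := by linear_combination hax + h
            rw [← ha1]
            exact (memKF a).mp haK
          obtain ⟨i, hiℓ, z, hz⟩ := coset_exists (Units.mk0 x hx0)
          rw [Units.val_mk0] at hz
          refine ⟨i, mem_range.mpr hiℓ, (memA (i:ℤ) x).mpr ⟨⟨y, ?_⟩, ⟨z, hz⟩⟩⟩
          rw [← hax, hy]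
      rw [himg, Finset.card_image_of_injective _ (add_right_injective 1)]
    -- off-diagonal count
    have hoffdisj : ∀ i ∈ range ℓ, ∀ i' ∈ range ℓ, i ≠ i' →
        Disjoint ((A (i:ℤ)).offDiag) ((A (i':ℤ)).offDiag) := by
      intro i hi i' hi' hne
      rw [Finset.disjoint_left]
      intro p hp hp'
      exact (Finset.disjoint_left.mp (hdisj i hi i' hi' hne))
        (Finset.mem_offDiag.mp hp).1 (Finset.mem_offDiag.mp hp').1
    have hbij : ((range ℓ).biUnion (fun i => (A (i:ℤ)).offDiag)).card
        = (KF.erase 1).card := by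
      refine Finset.card_bij (fun p _ => p.2 * p.1⁻¹) ?_ ?_ ?_
      · rintro p hp
        rw [Finset.mem_biUnion] at hp
        obtain ⟨i, hi, hpo⟩ := hp
        obtain ⟨hp1, hp2, hpne⟩ := Finset.mem_offDiag.mp hpo
        obtain ⟨_, _, _, hPKt, hx0, _⟩ := hrep2 (i:ℤ) p.1 p.2 hp1 hp2
        refine Finset.mem_erase.mpr ⟨?_, (memKF _).mpr hPKt⟩
        intro h
        apply hpne
        have h' : p.2 * p.1⁻¹ = 1 := h
        rw [← div_eq_mul_inv] at h'
        exact ((div_eq_one_iff_eq hx0).mp h').symm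
      · intro p hp p' hp' heq
        have heq' : p.2 * p.1⁻¹ = p'.2 * p'.1⁻¹ := heq
        rw [Finset.mem_biUnion] at hp hp'
        obtain ⟨i, hi, hpo⟩ := hp
        obtain ⟨i', hi', hpo'⟩ := hp'
        obtain ⟨hp1, hp2, hpne⟩ := Finset.mem_offDiag.mp hpo
        obtain ⟨hq1, hq2, hqne⟩ := Finset.mem_offDiag.mp hpo'
        obtain ⟨hPKy1, hPKta, hiden, hPKt, hx0, hy0⟩ := hrep2 _ p.1 p.2 hp1 hp2
        obtain ⟨hPKy1', hPKta', hiden', hPKt', hx0', hy0'⟩ := hrep2 _ p'.1 p'.2 hq1 hq2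
        have htne1 : p.2 * p.1⁻¹ ≠ 1 := by
          intro h
          apply hpne
          rw [← div_eq_mul_inv] at h
          exact ((div_eq_one_iff_eq hx0).mp h).symm
        have htsub : p.2 * p.1⁻¹ - 1 ≠ 0 := sub_ne_zero.mpr htne1
        obtain ⟨pr, hpr, hupr⟩ := huniq (p.2 * p.1⁻¹ - 1) htsub
        have e1 := hupr (p.2 - 1, p.2 * p.1⁻¹ * (p.1 - 1)) ⟨hPKy1, hPKta, hiden⟩
        have e2 := hupr (p'.2 - 1, p.2 * p.1⁻¹ * (p'.1 - 1)) ⟨hPKy1', by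
            rw [heq']; exact hPKta', by rw [heq']; exact hiden'⟩
        have e3 : ((p.2 - 1 : F), p.2 * p.1⁻¹ * (p.1 - 1))
            = ((p'.2 - 1 : F), p.2 * p.1⁻¹ * (p'.1 - 1)) := by rw [e1, e2]
        have h21 : p.2 = p'.2 := by
          have h := congrArg Prod.fst e3
          simp only [Prod.fst] at h
          linear_combination h
        have htne0 : p.2 * p.1⁻¹ ≠ 0 := PK_ne _ hPKt
        have h11 : p.1 = p'.1 := by
          have h := congrArg Prod.snd e3
          simp only [Prod.snd] at h
          have h' := mul_left_cancel₀ htne0 h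
          linear_combination h'
        exact Prod.ext h11 h21
      · intro t htmem
        obtain ⟨htne1, htK⟩ := Finset.mem_erase.mp htmem
        have hPKt : PK t := (memKF t).mp htK
        have htne0 : t ≠ 0 := PK_ne t hPKt
        have htsub : t - 1 ≠ 0 := sub_ne_zero.mpr htne1
        obtain ⟨pr, ⟨hprb, hpra, hprd⟩, _⟩ := huniq (t - 1) htsub
        have ha : PK (pr.2 * t⁻¹) := PK_mul _ _ hpra (PK_inv _ hPKt)
        have hx0 : (1 : F) + pr.2 * t⁻¹ ≠ 0 := by
          intro h
          apply hK1
          have ha1 : pr.2 * t⁻¹ = -1 := by linear_combination h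
          rw [← ha1]
          exact ha
        have hytx : (1 : F) + pr.1 = t * (1 + pr.2 * t⁻¹) := by
          have hexp : t * ((1:F) + pr.2 * t⁻¹) = t + pr.2 := by
            field_simp
          rw [hexp]
          linear_combination hprd
        obtain ⟨i, hiℓ, z, hz⟩ := coset_exists (Units.mk0 _ hx0)
        rw [Units.val_mk0] at hz
        obtain ⟨s, hs⟩ := hPKt
        obtain ⟨ya, hya⟩ := ha
        obtain ⟨yb, hyb⟩ := hprb
        have hxA : (1 : F) + pr.2 * t⁻¹ ∈ A (i:ℤ) :=
          (memA _ _).mpr ⟨⟨ya, by rw [hya]⟩, ⟨z, hz⟩⟩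
        have hyA : (1 : F) + pr.1 ∈ A (i:ℤ) := by
          refine (memA _ _).mpr ⟨⟨yb, by rw [hyb]⟩, ⟨z * s, ?_⟩⟩
          have hu2 : (g ^ (i:ℤ) * (z * s) ^ ℓ : Fˣ) = s ^ ℓ * (g ^ (i:ℤ) * z ^ ℓ) := by
            rw [mul_pow, mul_comm (z ^ ℓ) (s ^ ℓ), ← mul_assoc,
              mul_comm (g ^ (i:ℤ)) (s ^ ℓ), mul_assoc]
          rw [hytx, hu2, hz, hs]
          simp
        have hxy : (1 : F) + pr.2 * t⁻¹ ≠ 1 + pr.1 := by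
          intro h
          have : (t - 1) * (1 + pr.2 * t⁻¹) = 0 := by
            linear_combination -hytx - h
          rcases mul_eq_zero.mp this with h' | h'
          · exact htsub h'
          · exact hx0 h'
        refine ⟨((1 : F) + pr.2 * t⁻¹, (1 : F) + pr.1), ?_, ?_⟩
        · exact Finset.mem_biUnion.mpr ⟨i, mem_range.mpr hiℓ,
            Finset.mem_offDiag.mpr ⟨hxA, hyA, hxy⟩⟩
        · show ((1 : F) + pr.1) * ((1 : F) + pr.2 * t⁻¹)⁻¹ = t
          rw [hytx, mul_inv_cancel_right₀ hx0]
    have hterm : ∀ i : ℤ, ((A i).offDiag).card = (A i).card * ((A i).card - 1) := by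
      intro i
      rw [Finset.offDiag_card]
      rcases n : (A i).card with _ | m
      · rfl
      · rw [Nat.succ_sub_one, Nat.mul_succ, Nat.add_sub_cancel]
    have h1K : (1:F) ∈ KF := (memKF 1).mpr PK_one
    have hsum2 : ∑ i ∈ range ℓ, (A (i:ℤ)).card * ((A (i:ℤ)).card - 1) = KF.card - 1 := by
      calc ∑ i ∈ range ℓ, (A (i:ℤ)).card * ((A (i:ℤ)).card - 1)
          = ∑ i ∈ range ℓ, ((A (i:ℤ)).offDiag).card := by
            refine Finset.sum_congr rfl fun i _ => (hterm (i:ℤ)).symm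
        _ = ((range ℓ).biUnion (fun i => (A (i:ℤ)).offDiag)).card :=
            (Finset.card_biUnion hoffdisj).symm
        _ = (KF.erase 1).card := hbij
        _ = KF.card - 1 := Finset.card_erase_of_mem h1K
    -- final arithmetic
    rw [hcyc]
    by_contra hcon
    push_neg at hcon
    obtain ⟨hne0, hne2⟩ := hcon
    have hKpos : 0 < KF.card := Finset.card_pos.mpr ⟨1, h1K⟩
    have h0mem : (0:ℕ) ∈ range ℓ := mem_range.mpr (by omega)
    have hjmem : j ∈ range ℓ := mem_range.mpr hjℓ
    have hjmem' : j ∈ (range ℓ).erase 0 := mem_erase.mpr ⟨by omega, hjmem⟩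
    have hadd1 := Finset.add_sum_erase (range ℓ) (fun i => (A (i:ℤ)).card) h0mem
    have hadd2 := Finset.add_sum_erase (range ℓ)
      (fun i => (A (i:ℤ)).card * ((A (i:ℤ)).card - 1)) h0mem
    simp only [Nat.cast_zero, hA0] at hadd1 hadd2
    rw [hsum1] at hadd1
    rw [hsum2] at hadd2
    have hs1' : ∑ i ∈ (range ℓ).erase 0, (A (i:ℤ)).card = KF.card - 1 := by omega
    have hs2' : ∑ i ∈ (range ℓ).erase 0, (A (i:ℤ)).card * ((A (i:ℤ)).card - 1)
        = KF.card - 1 := by omega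
    have heven : ∀ i ∈ (range ℓ).erase 0, Even (A (i:ℤ)).card := by
      intro i hi
      obtain ⟨hine, hirange⟩ := mem_erase.mp hi
      refine hparity _ ?_
      intro h
      have hd := coset_unique (i:ℤ) 0 2 h2ne h h20
      rw [sub_zero] at hd
      have hdi : ℓ ∣ i := by exact_mod_cast hd
      have := Nat.le_of_dvd (by omega) hdi
      rw [mem_range] at hirange
      omega
    have hle : ∀ i ∈ (range ℓ).erase 0,
        (A (i:ℤ)).card ≤ (A (i:ℤ)).card * ((A (i:ℤ)).card - 1) := by
      intro i hi
      obtain ⟨m, hm⟩ := heven i hi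
      rcases Nat.eq_zero_or_pos m with h | h
      · simp [hm, h]
      · have h2le : 2 ≤ (A (i:ℤ)).card := by omega
        calc (A (i:ℤ)).card = (A (i:ℤ)).card * 1 := (Nat.mul_one _).symm
          _ ≤ (A (i:ℤ)).card * ((A (i:ℤ)).card - 1) :=
            Nat.mul_le_mul_left _ (by omega)
    have hn4 : 4 ≤ (A (j:ℤ)).card := by
      obtain ⟨m, hm⟩ := hevenj
      omega
    have hlt : ∑ i ∈ (range ℓ).erase 0, (A (i:ℤ)).card
        < ∑ i ∈ (range ℓ).erase 0, (A (i:ℤ)).card * ((A (i:ℤ)).card - 1) := by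
      refine Finset.sum_lt_sum hle ⟨j, hjmem', ?_⟩
      obtain ⟨m, hm⟩ : ∃ m, (A (j:ℤ)).card = m + 4 := ⟨(A (j:ℤ)).card - 4, by omega⟩
      rw [hm]
      have hsub : m + 4 - 1 = m + 3 := by omega
      rw [hsub]
      have hexp : (m + 4) * (m + 3) = m * m + 7 * m + 12 := by ring
      omega
    rw [hs1', hs2'] at hlt
    exact lt_irrefl _ hlt
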